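/- There exist constants N > 0 and κ > 0, depending only on η and ε₀ and independent of ε, such that for all sufficiently small ε > 0 (ε ≪ N^{−1} e^{−N}), all α, β ∈ 𝔸, all θ ∈ Θ and all λ = e^s > 1, the set Z^{A,ε,λ}_{α,β,θ} is κ-dominated by Δ_{Q'} ∪ Δ_{Λ'_{1,s}} ∪ Δ_{Λ'_{2,s}}; in particular Z^{A,ε,λ}_{α,β,θ} is empty whenever (α, β) does not satisfy condition (AA). -/

import Mathlib

open MeasureTheory Filter Set
open scoped ENNReal Topology

noncomputable section

/-- `η = a + ib`. -/
def etaC (a b : ℝ) : ℂ := (a : ℂ) + (b : ℂ) * Complex.I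

/-- The open sector `S = {u+iv : v > 0, bu + av > 0}`. -/
def sectorS (a b : ℝ) : Set ℂ := {z : ℂ | 0 < z.im ∧ 0 < b * z.re + a * z.im}

/-- The ring `𝔸 = {α : e^{-2πb} < |α| ≤ 1}`. -/
def ringA (b : ℝ) : Set ℂ :=
  {α : ℂ | Real.exp (-(2 * Real.pi * b)) < ‖α‖ ∧ ‖α‖ ≤ 1}

/-- The parametrization `x(α, ζ) = (α e^{iη(ζ + b⁻¹ log|α|)}, e^{i(ζ + b⁻¹ log|α|)})` of the
leaf `L_α` near a hyperbolic singularity. -/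
def xmap (a b : ℝ) (α ζ : ℂ) : ℂ × ℂ :=
  (α * Complex.exp (Complex.I * etaC a b * (ζ + ((Real.log (‖α‖) / b : ℝ) : ℂ))),
   Complex.exp (Complex.I * (ζ + ((Real.log (‖α‖) / b : ℝ) : ℂ))))

/-- The parameter region `Θ = {θ : |θ₁ - 1| < ε₀, |θ₂ - 1| < ε₀}`. -/
def thetaSet (e0 : ℝ) : Set (ℂ × ℂ) :=
  {θ : ℂ × ℂ | ‖θ.1 - 1‖ < e0 ∧ ‖θ.2 - 1‖ < e0}

/-- The solution set `Z^λ_{α,β,θ} = {(ζ, ζ̌) ∈ S × S : x(α,ζ) - x(β,ζ̌) = θ/λ}`. -/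
def solSet (a b : ℝ) (α β : ℂ) (θ : ℂ × ℂ) (lam : ℝ) : Set (ℂ × ℂ) :=
  {p : ℂ × ℂ | p.1 ∈ sectorS a b ∧ p.2 ∈ sectorS a b ∧
    (xmap a b α p.1).1 - (xmap a b β p.2).1 = θ.1 / (lam : ℂ) ∧
    (xmap a b α p.1).2 - (xmap a b β p.2).2 = θ.2 / (lam : ℂ)}

/-- The ratio `ρ₁ = x₁/y₁` at a solution `p = (ζ, ζ̌)`. -/
def rho1 (a b : ℝ) (α β : ℂ) (p : ℂ × ℂ) : ℂ := (xmap a b α p.1).1 / (xmap a b β p.2).1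

/-- The ratio `ρ₂ = x₂/y₂` at a solution `p = (ζ, ζ̌)`. -/
def rho2 (a b : ℝ) (α β : ℂ) (p : ℂ × ℂ) : ℂ := (xmap a b α p.1).2 / (xmap a b β p.2).2

/-- The subset `Z^{A,ε,λ}_{α,β,θ}` of solutions with `|ρ₁ - 1| ≤ ε` and `|ρ₂ - 1| ≤ ε`. -/
def solA (a b : ℝ) (α β : ℂ) (θ : ℂ × ℂ) (lam ε : ℝ) : Set (ℂ × ℂ) :=
  {p ∈ solSet a b α β θ lam |
    ‖rho1 a b α β p - 1‖ ≤ ε ∧ ‖rho2 a b α β p - 1‖ ≤ ε}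

/-- The argument of a complex number taken in `[0, 2π)`. -/
def arg2pi (z : ℂ) : ℝ :=
  if Complex.arg z < 0 then Complex.arg z + 2 * Real.pi else Complex.arg z

/-- `δ_{α,β} = (arg α - arg β) - i(log|α| - log|β|) - 2nπ + 2mηπ`. -/
def deltaAB (a b : ℝ) (α β : ℂ) (n m : ℤ) : ℂ :=
  ((arg2pi α - arg2pi β : ℝ) : ℂ) -
    Complex.I * ((Real.log (‖α‖) - Real.log (‖β‖) : ℝ) : ℂ) -
    2 * (n : ℂ) * (Real.pi : ℂ) + 2 * (m : ℂ) * etaC a b * (Real.pi : ℂ)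

/-- Condition (AA): there are integers `n, m` with `|δ_{α,β}| ≤ Nε`. -/
def condAA (a b N ε : ℝ) (α β : ℂ) : Prop :=
  ∃ n m : ℤ, ‖deltaAB a b α β n m‖ ≤ N * ε

/-- The half-line `Q` from `0` through the points `ζ_s = (1 - η̄) b⁻¹ s`. -/
def lineQ (a b : ℝ) : Set ℂ :=
  {z : ℂ | ∃ l : ℝ, 0 ≤ l ∧ z = (l : ℂ) * (1 - starRingEnd ℂ (etaC a b))}

/-- The half-line `Λ_{1,s} = {-η̄ b⁻¹ s + l : l ≥ 0}`. -/
def lam1Line (a b s : ℝ) : Set ℂ :=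
  {z : ℂ | ∃ l : ℝ, 0 ≤ l ∧ z = -(starRingEnd ℂ (etaC a b)) * ((s / b : ℝ) : ℂ) + (l : ℂ)}

/-- The half-line `Λ_{2,s} = {b⁻¹ s - η̄ l : l ≥ 0}`. -/
def lam2Line (a b s : ℝ) : Set ℂ :=
  {z : ℂ | ∃ l : ℝ, 0 ≤ l ∧ z = ((s / b : ℝ) : ℂ) - (starRingEnd ℂ (etaC a b)) * (l : ℂ)}

/-- The diagonal `Δ_X = {(ζ,ζ) : ζ ∈ X}` over a subset `X` of `ℂ`. -/
def diagOf (X : Set ℂ) : Set (ℂ × ℂ) := {p : ℂ × ℂ | p.1 = p.2 ∧ p.1 ∈ X}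

/-- A set `Z` is `κ`-dominated by `Z'`: every point of `Z` lies at distance `≤ κ` from `Z'`. -/
def SetDomBySet {α : Type*} [PseudoMetricSpace α] (κ : ℝ) (Z Z' : Set α) : Prop :=
  ∀ x ∈ Z, ∃ y ∈ Z', dist x y ≤ κ

/-! At a solution, `ρ₂ - 1 = θ₂ e^{Im ζ̌} / λ` and `ρ₁ - 1 = θ₁ e^{b Re ζ̌ + a Im ζ̌} / λ`, and
comparing `x(α, ζ)` with `x(β, ζ̌)` gives integers `j, k` with `log ρ₁ - η log ρ₂ = i δ_{j,k}` and
`ζ - ζ̌ = -i log ρ₂ + 2πk - b⁻¹ log |α/β|`. Since `log ρ ≈ ρ - 1` is `O(ε)`, `|δ_{j,k}| ≤ Nε`,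
which is (AA). The values of `δ` differ by elements of the discrete lattice `2πℤ + 2πηℤ`, so any
witness `(n, m)` of (AA) equals `(j, k)`, and `|k| ≤ 1` because `α, β ∈ 𝔸`; hence `ζ` stays
within bounded distance of `ζ̌`. Finally, up to additive constants, `log |δ| - s` is the larger
of `b Re ζ̌ + a Im ζ̌` and `Im ζ̌ + log |η|`. If the first dominates, `ζ̌` is close to `Λ_{2,s'}`;
if the second does, to `Λ_{1,s'}`; if they are comparable, to `Q`. -/

lemma abs_log_sub_log_le_log_of_le_mul {x y c : ℝ} (hx : 0 < x) (hy : 0 < y)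
    (hxy : x ≤ c * y) (hyx : y ≤ c * x) : |Real.log x - Real.log y| ≤ Real.log c := by
  have hc : 0 < c := pos_of_mul_pos_left (hx.trans_le hxy) hy.le
  have h1 := Real.log_le_log hx hxy
  have h2 := Real.log_le_log hy hyx
  rw [Real.log_mul hc.ne' hy.ne'] at h1
  rw [Real.log_mul hc.ne' hx.ne'] at h2
  rw [abs_le]
  constructor <;> linarith

lemma log_norm_sub_cases (z w : ℂ) :
    |Real.log ‖z - w‖ - Real.log ‖z‖| ≤ Real.log 2 ∨
    |Real.log ‖z - w‖ - Real.log ‖w‖| ≤ Real.log 2 ∨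
    |Real.log ‖z‖ - Real.log ‖w‖| ≤ Real.log 2 := by
  have hlog2 := Real.log_nonneg one_le_two
  rcases eq_or_ne z 0 with rfl | hz
  · right; left; simp [hlog2]
  rcases eq_or_ne w 0 with rfl | hw
  · left; simp [hlog2]
  have hz' := norm_pos_iff.2 hz
  have hw' := norm_pos_iff.2 hw
  have hsub := norm_sub_le z w
  have hsub' := norm_sub_norm_le z w
  have hsub'' := norm_sub_norm_le w z
  rw [norm_sub_rev w z] at hsub''
  by_cases h1 : 2 * ‖w‖ ≤ ‖z‖
  · exact Or.inl (abs_log_sub_log_le_log_of_le_mul (by linarith) hz' (by linarith) (by linarith))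
  by_cases h2 : 2 * ‖z‖ ≤ ‖w‖
  · exact Or.inr (Or.inl
      (abs_log_sub_log_le_log_of_le_mul (by linarith) hw' (by linarith) (by linarith)))
  exact Or.inr (Or.inr (abs_log_sub_log_le_log_of_le_mul hz' hw' (by linarith) (by linarith)))

lemma norm_log_le_and_norm_sub_one_le {ρ : ℂ} (h : ‖ρ - 1‖ ≤ 1 / 2) :
    ‖Complex.log ρ‖ ≤ 2 * ‖ρ - 1‖ ∧ ‖ρ - 1‖ ≤ 2 * ‖Complex.log ρ‖ := by
  have hup : ‖Complex.log ρ‖ ≤ 3 / 2 * ‖ρ - 1‖ := by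
    simpa using Complex.norm_log_one_add_half_le_self h
  have hρ : ρ ≠ 0 := by
    rintro rfl
    norm_num at h
  refine ⟨by linarith [norm_nonneg (ρ - 1)], ?_⟩
  simpa [Complex.exp_log hρ] using
    Complex.norm_exp_sub_one_le (x := Complex.log ρ) (by linarith)

lemma abs_log_norm_le_log_two {θ : ℂ} (h : ‖θ - 1‖ ≤ 1 / 2) : |Real.log ‖θ‖| ≤ Real.log 2 := by
  have h1 := norm_sub_norm_le θ 1
  have h2 := norm_sub_norm_le 1 θ
  rw [norm_one] at h1
  rw [norm_sub_rev 1 θ, norm_one] at h2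
  simpa using abs_log_sub_log_le_log_of_le_mul (x := ‖θ‖) (y := 1) (by linarith) one_pos
    (by linarith) (by linarith)

lemma log_ne_zero_and_abs_log_norm_log_sub_le {ρ θ : ℂ} {t : ℝ}
    (hρ : ‖ρ - 1‖ = ‖θ‖ * Real.exp t) (hθ : ‖θ - 1‖ ≤ 1 / 2) (h : ‖ρ - 1‖ ≤ 1 / 2) :
    Complex.log ρ ≠ 0 ∧ |Real.log ‖Complex.log ρ‖ - t| ≤ 2 * Real.log 2 := by
  obtain ⟨hup, hlo⟩ := norm_log_le_and_norm_sub_one_le h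
  have hθ0 : θ ≠ 0 := by
    rintro rfl
    norm_num at hθ
  have hpos : 0 < ‖ρ - 1‖ := hρ ▸ mul_pos (norm_pos_iff.2 hθ0) (Real.exp_pos t)
  have hlog : Real.log ‖ρ - 1‖ = Real.log ‖θ‖ + t := by
    rw [hρ, Real.log_mul (norm_ne_zero_iff.2 hθ0) (Real.exp_pos t).ne', Real.log_exp]
  have hL : 0 < ‖Complex.log ρ‖ := by linarith
  refine ⟨norm_pos_iff.1 hL, ?_⟩
  have h1 := abs_log_sub_log_le_log_of_le_mul hL hpos hup hlo
  have h2 := abs_log_norm_le_log_two hθ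
  rw [abs_le] at h1 h2 ⊢
  constructor <;> linarith

section Leaf

variable {a b : ℝ}

lemma etaC_ne_zero (hb : b ≠ 0) : etaC a b ≠ 0 :=
  fun h => hb (by simpa [etaC] using congrArg Complex.im h)

lemma log_norm_mem_Ioc_of_mem_ringA {α : ℂ} (hα : α ∈ ringA b) :
    Real.log ‖α‖ ∈ Ioc (-(2 * Real.pi * b)) 0 :=
  ⟨(Real.lt_log_iff_exp_lt ((Real.exp_pos _).trans hα.1)).2 hα.1,
    Real.log_nonpos (norm_nonneg α) hα.2⟩

lemma ne_zero_of_mem_ringA {α : ℂ} (hα : α ∈ ringA b) : α ≠ 0 :=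
  norm_pos_iff.1 ((Real.exp_pos _).trans hα.1)

lemma abs_log_norm_sub_log_norm_lt {α β : ℂ} (hα : α ∈ ringA b) (hβ : β ∈ ringA b) :
    |Real.log ‖α‖ - Real.log ‖β‖| < 2 * Real.pi * b := by
  obtain ⟨hα1, hα2⟩ := log_norm_mem_Ioc_of_mem_ringA hα
  obtain ⟨hβ1, hβ2⟩ := log_norm_mem_Ioc_of_mem_ringA hβ
  rw [abs_lt]
  constructor <;> linarith

lemma exp_arg2pi_mul_I_add_log_norm {γ : ℂ} (hγ : γ ≠ 0) :
    Complex.exp (arg2pi γ * Complex.I + Real.log ‖γ‖) = γ := by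
  have base : Complex.exp (Complex.arg γ * Complex.I + Real.log ‖γ‖) = γ := by
    rw [Complex.exp_add, ← Complex.ofReal_exp, Real.exp_log (norm_pos_iff.mpr hγ), mul_comm,
      Complex.norm_mul_exp_arg_mul_I]
  unfold arg2pi
  split_ifs
  · push_cast
    rw [add_mul, add_right_comm, Complex.exp_add, base, Complex.exp_two_pi_mul_I, mul_one]
  · exact base

lemma exp_I_mul_deltaAB {α β : ℂ} (hα : α ≠ 0) (hβ : β ≠ 0) (n m : ℤ) :
    Complex.exp (Complex.I * deltaAB a b α β n m) =
      α / β * Complex.exp (2 * Real.pi * m * etaC a b * Complex.I) := by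
  have hδ : Complex.I * deltaAB a b α β n m =
      (arg2pi α * Complex.I + Real.log ‖α‖) - (arg2pi β * Complex.I + Real.log ‖β‖) +
        (-n : ℤ) * (2 * Real.pi * Complex.I) + 2 * Real.pi * m * etaC a b * Complex.I := by
    simp only [deltaAB]
    push_cast
    linear_combination (Real.log ‖β‖ - Real.log ‖α‖ : ℂ) * Complex.I_mul_I
  rw [hδ, Complex.exp_add, Complex.exp_add, Complex.exp_sub, exp_arg2pi_mul_I_add_log_norm hα,
    exp_arg2pi_mul_I_add_log_norm hβ, Complex.exp_int_mul_two_pi_mul_I, mul_one]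

lemma deltaAB_sub_deltaAB (α β : ℂ) (n m j k : ℤ) :
    deltaAB a b α β n m - deltaAB a b α β j k =
      2 * Real.pi * ((m - k : ℤ) * etaC a b - (n - j : ℤ)) := by
  simp only [deltaAB]
  push_cast
  ring

lemma deltaAB_im (α β : ℂ) (n m : ℤ) :
    (deltaAB a b α β n m).im = 2 * Real.pi * m * b - (Real.log ‖α‖ - Real.log ‖β‖) := by
  simp [deltaAB, etaC]
  ring

/-- Differences of values of `δ` lie in the lattice `2πℤ + 2πηℤ`, which is discrete as
`Im η = b > 0`. -/

lemma eq_of_norm_deltaAB_sub_lt (hb : 0 < b) {α β : ℂ} {n m j k : ℤ}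
    (h2πb : ‖deltaAB a b α β n m - deltaAB a b α β j k‖ < 2 * Real.pi * b)
    (h2π : ‖deltaAB a b α β n m - deltaAB a b α β j k‖ < 2 * Real.pi) : n = j ∧ m = k := by
  rw [deltaAB_sub_deltaAB] at h2πb h2π
  have hπb : 0 < 2 * Real.pi * b := by positivity
  have hm : m = k := by
    have him : (2 * Real.pi * (((m - k : ℤ) : ℂ) * etaC a b - ((n - j : ℤ) : ℂ))).im =
        2 * Real.pi * b * ((m - k : ℤ) : ℝ) := by
      simp [etaC]
      ring
    have hlt := (Complex.abs_im_le_norm _).trans_lt h2πb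
    rw [him, abs_mul, abs_of_pos hπb] at hlt
    have := Int.abs_lt_one_iff.1 (by exact_mod_cast (mul_lt_iff_lt_one_right hπb).1 hlt)
    omega
  subst hm
  have hlt : 2 * Real.pi * |((j - n : ℤ) : ℝ)| < 2 * Real.pi := by
    rw [show ((m - m : ℤ) : ℂ) * etaC a b - ((n - j : ℤ) : ℂ) = ((j - n : ℤ) : ℂ) by
      push_cast; ring, norm_mul, Complex.norm_intCast] at h2π
    simpa [abs_of_pos Real.pi_pos] using h2π
  have := Int.abs_lt_one_iff.1
    (by exact_mod_cast (mul_lt_iff_lt_one_right Real.two_pi_pos).1 hlt)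
  exact ⟨by omega, rfl⟩

lemma abs_le_one_of_norm_deltaAB_le (hb : 0 < b) {α β : ℂ} (hα : α ∈ ringA b)
    (hβ : β ∈ ringA b) {n m : ℤ} (h : ‖deltaAB a b α β n m‖ ≤ 2 * Real.pi * b) : |m| ≤ 1 := by
  have him := (Complex.abs_im_le_norm _).trans h
  rw [deltaAB_im, show 2 * Real.pi * m * b = 2 * Real.pi * b * m by ring] at him
  have hαβ := abs_log_norm_sub_log_norm_lt hα hβ
  have hπb : 0 < 2 * Real.pi * b := by positivity
  have hlt : 2 * Real.pi * b * |(m : ℝ)| < 2 * Real.pi * b * 2 := by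
    have := abs_add_le (2 * Real.pi * b * m - (Real.log ‖α‖ - Real.log ‖β‖))
      (Real.log ‖α‖ - Real.log ‖β‖)
    rw [sub_add_cancel, abs_mul, abs_of_pos hπb] at this
    linarith
  have : |(m : ℝ)| < 2 := lt_of_mul_lt_mul_left hlt hπb.le
  have : |m| < 2 := by exact_mod_cast this
  omega

lemma exists_I_mul_deltaAB_eq_and_sub_eq {α β : ℂ} (hα : α ≠ 0) (hβ : β ≠ 0) (p : ℂ × ℂ) :
    ∃ j k : ℤ,
      Complex.I * deltaAB a b α β j k =
        Complex.log (rho1 a b α β p) - etaC a b * Complex.log (rho2 a b α β p) ∧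
      p.1 - p.2 = -Complex.I * Complex.log (rho2 a b α β p) + 2 * Real.pi * k -
        ((Real.log ‖α‖ - Real.log ‖β‖) / b : ℝ) := by
  set u : ℂ := p.1 + (Real.log ‖α‖ / b : ℝ) with hu
  set v : ℂ := p.2 + (Real.log ‖β‖ / b : ℝ) with hv
  have hρ2 : rho2 a b α β p = Complex.exp (Complex.I * (u - v)) := by
    rw [rho2, show (xmap a b α p.1).2 = Complex.exp (Complex.I * u) from rfl,
      show (xmap a b β p.2).2 = Complex.exp (Complex.I * v) from rfl, ← Complex.exp_sub, mul_sub]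
  have hρ1 : rho1 a b α β p = α / β * Complex.exp (etaC a b * (Complex.I * (u - v))) := by
    rw [rho1, show (xmap a b α p.1).1 = α * Complex.exp (Complex.I * etaC a b * u) from rfl,
      show (xmap a b β p.2).1 = β * Complex.exp (Complex.I * etaC a b * v) from rfl,
      mul_div_mul_comm, ← Complex.exp_sub]
    ring_nf
  have hρ1ne : rho1 a b α β p ≠ 0 := hρ1 ▸ mul_ne_zero (div_ne_zero hα hβ) (Complex.exp_ne_zero _)
  obtain ⟨k, hk⟩ : ∃ k : ℤ, Complex.I * (u - v) =
      Complex.log (rho2 a b α β p) + k * (2 * Real.pi * Complex.I) := by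
    rw [← Complex.exp_eq_exp_iff_exists_int, Complex.exp_log (hρ2 ▸ Complex.exp_ne_zero _), hρ2]
  have hexp : Complex.exp (Complex.I * deltaAB a b α β 0 k) = Complex.exp
      (Complex.log (rho1 a b α β p) - etaC a b * Complex.log (rho2 a b α β p)) := by
    rw [exp_I_mul_deltaAB hα hβ, Complex.exp_sub, Complex.exp_log hρ1ne, hρ1, hk, mul_add,
      Complex.exp_add]
    field_simp
  obtain ⟨j, hj⟩ := Complex.exp_eq_exp_iff_exists_int.1 hexp
  refine ⟨j, k, ?_, ?_⟩
  · have : deltaAB a b α β j k = deltaAB a b α β 0 k - 2 * j * Real.pi := by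
      simp only [deltaAB]
      push_cast
      ring
    rw [this]
    linear_combination hj
  · have huv : u - v = -Complex.I * Complex.log (rho2 a b α β p) + 2 * Real.pi * k := by
      linear_combination (-Complex.I) * hk + (u - v - 2 * Real.pi * k) * Complex.I_mul_I
    rw [hu, hv] at huv
    push_cast at huv ⊢
    linear_combination huv

lemma norm_rho2_sub_one {α β : ℂ} {θ : ℂ × ℂ} {s : ℝ} {p : ℂ × ℂ}
    (hp : p ∈ solSet a b α β θ (Real.exp s)) :
    ‖rho2 a b α β p - 1‖ = ‖θ.2‖ * Real.exp (p.2.im - s) := by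
  have hy : ‖(xmap a b β p.2).2‖ = Real.exp (-p.2.im) := by
    simp [xmap, Complex.norm_exp, Complex.mul_re]
  have hy0 : (xmap a b β p.2).2 ≠ 0 := norm_ne_zero_iff.1 (hy ▸ (Real.exp_pos _).ne')
  rw [rho2, div_sub_one hy0, hp.2.2.2, norm_div, norm_div, hy,
    Complex.norm_real, Real.norm_of_nonneg (Real.exp_pos s).le, Real.exp_sub, Real.exp_neg]
  field_simp

lemma norm_rho1_sub_one (hb : b ≠ 0) {α β : ℂ} (hβ : β ≠ 0) {θ : ℂ × ℂ} {s : ℝ} {p : ℂ × ℂ}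
    (hp : p ∈ solSet a b α β θ (Real.exp s)) :
    ‖rho1 a b α β p - 1‖ = ‖θ.1‖ * Real.exp (b * p.2.re + a * p.2.im - s) := by
  have hy : ‖(xmap a b β p.2).1‖ = Real.exp (-(b * p.2.re + a * p.2.im)) := by
    have hre : (Complex.I * etaC a b * (p.2 + (Real.log ‖β‖ / b : ℝ))).re =
        -(b * p.2.re + a * p.2.im) - Real.log ‖β‖ := by
      simp [etaC, Complex.mul_re, Complex.mul_im]
      field_simp
      ring
    rw [xmap, norm_mul, Complex.norm_exp, hre, Real.exp_sub, Real.exp_log (norm_pos_iff.2 hβ)]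
    field_simp
  have hy0 : (xmap a b β p.2).1 ≠ 0 := norm_ne_zero_iff.1 (hy ▸ (Real.exp_pos _).ne')
  rw [rho1, div_sub_one hy0, hp.2.2.1, norm_div, norm_div, hy, Complex.norm_real,
    Real.norm_of_nonneg (Real.exp_pos s).le, Real.exp_sub, Real.exp_neg]
  field_simp

lemma norm_log_rho_sub_le {α β : ℂ} {θ : ℂ × ℂ} {lam ε : ℝ} {p : ℂ × ℂ}
    (hp : p ∈ solA a b α β θ lam ε) (hε : ε ≤ 1 / 2) :
    ‖Complex.log (rho1 a b α β p) - etaC a b * Complex.log (rho2 a b α β p)‖ ≤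
      2 * (1 + ‖etaC a b‖) * ε := by
  have h1 := (norm_log_le_and_norm_sub_one_le (hp.2.1.trans hε)).1
  have h2 := (norm_log_le_and_norm_sub_one_le (hp.2.2.trans hε)).1
  calc _ ≤ ‖Complex.log (rho1 a b α β p)‖ + ‖etaC a b‖ * ‖Complex.log (rho2 a b α β p)‖ := by
        rw [← norm_mul]; exact norm_sub_le _ _
    _ ≤ 2 * ε + ‖etaC a b‖ * (2 * ε) := by
        gcongr
        · linarith [hp.2.1]
        · linarith [hp.2.2]
    _ = 2 * (1 + ‖etaC a b‖) * ε := by ring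

lemma condAA_of_mem_solA {α β : ℂ} (hα : α ≠ 0) (hβ : β ≠ 0) {θ : ℂ × ℂ} {lam N ε : ℝ}
    (hN : 2 * (1 + ‖etaC a b‖) ≤ N) (hε : ε ≤ 1 / 2) {p : ℂ × ℂ}
    (hp : p ∈ solA a b α β θ lam ε) : condAA a b N ε α β := by
  obtain ⟨j, k, hjk, -⟩ := exists_I_mul_deltaAB_eq_and_sub_eq (a := a) (b := b) hα hβ p
  have hε0 : 0 ≤ ε := (norm_nonneg _).trans hp.2.1
  refine ⟨j, k, ?_⟩
  calc ‖deltaAB a b α β j k‖ = ‖Complex.I * deltaAB a b α β j k‖ := by simp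
    _ ≤ 2 * (1 + ‖etaC a b‖) * ε := hjk ▸ norm_log_rho_sub_le hp hε
    _ ≤ N * ε := by gcongr

lemma dist_le_of_sub_eq (hb : 0 < b) {α β : ℂ} (hα : α ∈ ringA b) (hβ : β ∈ ringA b)
    {ζ ζ' L : ℂ} {k : ℤ} (hL : ‖L‖ ≤ 1) (hk : |k| ≤ 1)
    (h : ζ - ζ' = -Complex.I * L + 2 * Real.pi * k - ((Real.log ‖α‖ - Real.log ‖β‖) / b : ℝ)) :
    dist ζ ζ' ≤ 1 + 4 * Real.pi := by
  have hc : ‖(((Real.log ‖α‖ - Real.log ‖β‖) / b : ℝ) : ℂ)‖ ≤ 2 * Real.pi := by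
    rw [Complex.norm_real, Real.norm_eq_abs, abs_div, abs_of_pos hb, div_le_iff₀ hb]
    linarith [abs_log_norm_sub_log_norm_lt hα hβ]
  have hk' : ‖(2 * Real.pi * k : ℂ)‖ ≤ 2 * Real.pi := by
    have : |(k : ℝ)| ≤ 1 := by exact_mod_cast hk
    rw [show (2 * Real.pi * k : ℂ) = ((2 * Real.pi * k : ℝ) : ℂ) by push_cast; ring,
      Complex.norm_real, Real.norm_eq_abs, abs_mul, abs_of_pos Real.two_pi_pos]
    nlinarith [Real.pi_pos]
  have hIL : ‖-Complex.I * L‖ ≤ 1 := by simpa using hL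
  rw [Complex.dist_eq, h]
  linarith [norm_sub_le (-Complex.I * L + 2 * Real.pi * k)
    (((Real.log ‖α‖ - Real.log ‖β‖) / b : ℝ) : ℂ), norm_add_le (-Complex.I * L) (2 * Real.pi * k)]

lemma log_norm_cases_of_mem_solA (hb : 0 < b) {α β : ℂ} (hβ : β ≠ 0) {θ : ℂ × ℂ}
    (hθ : θ ∈ thetaSet (1 / 2)) {s ε : ℝ} (hε : ε ≤ 1 / 2) {p : ℂ × ℂ}
    (hp : p ∈ solA a b α β θ (Real.exp s) ε) :
    |Real.log ‖Complex.log (rho1 a b α β p) - etaC a b * Complex.log (rho2 a b α β p)‖ -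
        (b * p.2.re + a * p.2.im - s)| ≤ 5 * Real.log 2 ∨
    |Real.log ‖Complex.log (rho1 a b α β p) - etaC a b * Complex.log (rho2 a b α β p)‖ -
        (p.2.im - s + Real.log ‖etaC a b‖)| ≤ 5 * Real.log 2 ∨
    |b * p.2.re + a * p.2.im - p.2.im - Real.log ‖etaC a b‖| ≤ 5 * Real.log 2 := by
  obtain ⟨hsol, h1, h2⟩ := hp
  obtain ⟨-, hℓ1⟩ := log_ne_zero_and_abs_log_norm_log_sub_le (norm_rho1_sub_one hb.ne' hβ hsol)
    hθ.1.le (h1.trans hε)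
  obtain ⟨hL2, hℓ2⟩ := log_ne_zero_and_abs_log_norm_log_sub_le (norm_rho2_sub_one hsol)
    hθ.2.le (h2.trans hε)
  have hηL2 : Real.log ‖etaC a b * Complex.log (rho2 a b α β p)‖ =
      Real.log ‖etaC a b‖ + Real.log ‖Complex.log (rho2 a b α β p)‖ := by
    rw [norm_mul, Real.log_mul (norm_ne_zero_iff.2 (etaC_ne_zero hb.ne')) (norm_ne_zero_iff.2 hL2)]
  have hlog2 := Real.log_nonneg one_le_two
  rw [abs_le] at hℓ1 hℓ2
  rcases log_norm_sub_cases (Complex.log (rho1 a b α β p))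
    (etaC a b * Complex.log (rho2 a b α β p)) with h | h | h <;> rw [abs_le] at h
  · left; rw [abs_le]; constructor <;> linarith
  · right; left; rw [abs_le]; constructor <;> linarith
  · right; right; rw [abs_le]; constructor <;> linarith

lemma exists_mem_lineQ_dist_le (hb : 0 < b) {w : ℂ} (hw : 0 ≤ w.im) :
    ∃ z ∈ lineQ a b, dist w z ≤ |b * w.re + a * w.im - w.im| / b := by
  refine ⟨(w.im / b : ℝ) * (1 - starRingEnd ℂ (etaC a b)),
    ⟨w.im / b, div_nonneg hw hb.le, rfl⟩, le_of_eq ?_⟩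
  have : w - (w.im / b : ℝ) * (1 - starRingEnd ℂ (etaC a b)) =
      ((b * w.re + a * w.im - w.im) / b : ℝ) := by
    apply Complex.ext
    · simp [etaC]
      field_simp
      ring
    · simp [etaC]
      field_simp
      ring
  rw [Complex.dist_eq, this, Complex.norm_real, Real.norm_eq_abs, abs_div, abs_of_pos hb]

lemma exists_mem_lam1Line_dist_le (hb : 0 < b) {w : ℂ} (hw : 0 ≤ b * w.re + a * w.im) (t : ℝ) :
    ∃ z ∈ lam1Line a b t, dist w z ≤ |w.im - t| * ‖etaC a b‖ / b := by
  refine ⟨-starRingEnd ℂ (etaC a b) * (t / b : ℝ) + ((b * w.re + a * w.im) / b : ℝ),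
    ⟨_, div_nonneg hw hb.le, rfl⟩, le_of_eq ?_⟩
  have : w - (-starRingEnd ℂ (etaC a b) * (t / b : ℝ) + ((b * w.re + a * w.im) / b : ℝ)) =
      ((w.im - t) / b : ℝ) * -starRingEnd ℂ (etaC a b) := by
    apply Complex.ext
    · simp [etaC]
      field_simp
      ring
    · simp [etaC]
      field_simp
  rw [Complex.dist_eq, this, norm_mul, norm_neg, Complex.norm_conj, Complex.norm_real,
    Real.norm_eq_abs, abs_div, abs_of_pos hb]
  ring

lemma exists_mem_lam2Line_dist_le (hb : 0 < b) {w : ℂ} (hw : 0 ≤ w.im) (t : ℝ) :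
    ∃ z ∈ lam2Line a b t, dist w z ≤ |b * w.re + a * w.im - t| / b := by
  refine ⟨(t / b : ℝ) - starRingEnd ℂ (etaC a b) * (w.im / b : ℝ),
    ⟨_, div_nonneg hw hb.le, rfl⟩, le_of_eq ?_⟩
  have : w - ((t / b : ℝ) - starRingEnd ℂ (etaC a b) * (w.im / b : ℝ)) =
      ((b * w.re + a * w.im - t) / b : ℝ) := by
    apply Complex.ext
    · simp [etaC]
      field_simp
      ring
    · simp [etaC]
      field_simp
      ring
  rw [Complex.dist_eq, this, Complex.norm_real, Real.norm_eq_abs, abs_div, abs_of_pos hb]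

lemma exists_mem_lines_dist_le (hb : 0 < b) {w : ℂ} (hX : 0 < w.im)
    (hY : 0 < b * w.re + a * w.im) {s D N c : ℝ} (hc : 0 ≤ c)
    (hN : c + |Real.log ‖etaC a b‖| ≤ N)
    (h : |Real.log D - (b * w.re + a * w.im - s)| ≤ c ∨
      |Real.log D - (w.im - s + Real.log ‖etaC a b‖)| ≤ c ∨
      |b * w.re + a * w.im - w.im - Real.log ‖etaC a b‖| ≤ c) :
    ∃ z ∈ lineQ a b ∪
        (if 0 ≤ s + Real.log D + N then lam1Line a b (s + Real.log D + N) else ∅) ∪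
        (if 0 ≤ s + Real.log D + N then lam2Line a b (s + Real.log D + N) else ∅),
      dist w z ≤ (N + |Real.log ‖etaC a b‖| + c) * (1 + ‖etaC a b‖) / b := by
  have hlogη := abs_nonneg (Real.log ‖etaC a b‖)
  have hlogη' := neg_abs_le (Real.log ‖etaC a b‖)
  have hlogη'' := le_abs_self (Real.log ‖etaC a b‖)
  have hR : N + |Real.log ‖etaC a b‖| + c ≤ (N + |Real.log ‖etaC a b‖| + c) * (1 + ‖etaC a b‖) :=
    le_mul_of_one_le_right (by linarith) (by linarith [norm_nonneg (etaC a b)])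
  rcases h with h | h | h <;> rw [abs_le] at h
  · have hs : 0 ≤ s + Real.log D + N := by linarith
    obtain ⟨z, hz, hd⟩ := exists_mem_lam2Line_dist_le hb hX.le (s + Real.log D + N)
    refine ⟨z, Or.inr (by rwa [if_pos hs]), hd.trans (div_le_div_of_nonneg_right ?_ hb.le)⟩
    exact (abs_le.2 ⟨by linarith, by linarith⟩).trans hR
  · have hs : 0 ≤ s + Real.log D + N := by linarith
    obtain ⟨z, hz, hd⟩ := exists_mem_lam1Line_dist_le hb hY.le (s + Real.log D + N)
    refine ⟨z, Or.inl (Or.inr (by rwa [if_pos hs])),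
      hd.trans (div_le_div_of_nonneg_right ?_ hb.le)⟩
    exact mul_le_mul (abs_le.2 ⟨by linarith, by linarith⟩) (by linarith) (norm_nonneg _)
      (by linarith)
  · obtain ⟨z, hz, hd⟩ := exists_mem_lineQ_dist_le (a := a) hb hX.le
    refine ⟨z, Or.inl (Or.inl hz), hd.trans (div_le_div_of_nonneg_right ?_ hb.le)⟩
    exact (abs_le.2 ⟨by linarith, by linarith⟩).trans hR

lemma diagOf_union (X Y : Set ℂ) : diagOf (X ∪ Y) = diagOf X ∪ diagOf Y := by
  ext p
  simp only [diagOf, mem_union, mem_ofPred_eq]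
  tauto

lemma exists_mem_diagOf_dist_le {X : Set ℂ} {z : ℂ} (hz : z ∈ X) (p : ℂ × ℂ) :
    ∃ q ∈ diagOf X, dist p q ≤ dist p.1 p.2 + dist p.2 z :=
  ⟨(z, z), ⟨rfl, hz⟩, max_le (dist_triangle _ _ _) (le_add_of_nonneg_left dist_nonneg)⟩

theorem setDomBySet_solA (hb : 0 < b) {α β : ℂ} (hα : α ∈ ringA b) (hβ : β ∈ ringA b)
    {θ : ℂ × ℂ} (hθ : θ ∈ thetaSet (1 / 2)) {N ε : ℝ} (hN : 2 * (1 + ‖etaC a b‖) ≤ N)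
    (hNlog : 5 * Real.log 2 + |Real.log ‖etaC a b‖| ≤ N) (hε : ε ≤ 1 / 2)
    (hNεb : N * ε < Real.pi * b) (hNε : N * ε < Real.pi) (s : ℝ) {n m : ℤ}
    (hnm : ‖deltaAB a b α β n m‖ ≤ N * ε) :
    SetDomBySet (1 + 4 * Real.pi +
        (N + |Real.log ‖etaC a b‖| + 5 * Real.log 2) * (1 + ‖etaC a b‖) / b)
      (solA a b α β θ (Real.exp s) ε)
      (diagOf (lineQ a b) ∪
        diagOf (if 0 ≤ s + Real.log ‖deltaAB a b α β n m‖ + N then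
          lam1Line a b (s + Real.log ‖deltaAB a b α β n m‖ + N) else ∅) ∪
        diagOf (if 0 ≤ s + Real.log ‖deltaAB a b α β n m‖ + N then
          lam2Line a b (s + Real.log ‖deltaAB a b α β n m‖ + N) else ∅)) := by
  intro p hp
  obtain ⟨j, k, hjk, hsub⟩ := exists_I_mul_deltaAB_eq_and_sub_eq (a := a)
    (ne_zero_of_mem_ringA hα) (ne_zero_of_mem_ringA hβ) p
  have hD : ‖deltaAB a b α β j k‖ =
      ‖Complex.log (rho1 a b α β p) - etaC a b * Complex.log (rho2 a b α β p)‖ := by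
    rw [← hjk, norm_mul, Complex.norm_I, one_mul]
  have hε0 : 0 ≤ ε := (norm_nonneg _).trans hp.2.1
  have hjk' : ‖deltaAB a b α β j k‖ ≤ N * ε :=
    hD ▸ (norm_log_rho_sub_le hp hε).trans (by gcongr)
  have hdiff := (norm_sub_le (deltaAB a b α β n m) (deltaAB a b α β j k)).trans
    (add_le_add hnm hjk')
  obtain ⟨rfl, rfl⟩ := eq_of_norm_deltaAB_sub_lt hb (by linarith) (by linarith)
  have hk := abs_le_one_of_norm_deltaAB_le hb hα hβ (hnm.trans (by nlinarith [Real.pi_pos]))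
  have hL2 : ‖Complex.log (rho2 a b α β p)‖ ≤ 1 :=
    (norm_log_le_and_norm_sub_one_le (hp.2.2.trans hε)).1.trans (by linarith [hp.2.2])
  have hdist := dist_le_of_sub_eq hb hα hβ hL2 hk hsub
  rw [hD, ← diagOf_union, ← diagOf_union]
  obtain ⟨z, hz, hwz⟩ := exists_mem_lines_dist_le hb hp.1.2.1.1 hp.1.2.1.2
    (by positivity) hNlog (log_norm_cases_of_mem_solA hb (ne_zero_of_mem_ringA hβ) hθ hε hp)
  obtain ⟨q, hq, hpq⟩ := exists_mem_diagOf_dist_le hz p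
  exact ⟨q, hq, by linarith⟩

end Leaf

/-- there are `N, κ > 0` (independent of `ε`) such that, for all sufficiently
small `ε > 0` (smaller than some threshold `ε₁ ≤ N⁻¹e^{-N}`), the set `Z^{A,ε,λ}_{α,β,θ}` is
`κ`-dominated by `Δ_{Q'} ∪ Δ_{Λ'_{1,s}} ∪ Δ_{Λ'_{2,s}}`, where the primed sets are built from
`s' = s + log|δ_{α,β}| + N` when condition (AA) holds (with its unique witnesses `n, m`);
in particular `Z^{A,ε,λ}_{α,β,θ}` is empty when (AA) fails. -/
theorem stmt11 (a b : ℝ) (hb : 0 < b) :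
    ∃ e0 : ℝ, 0 < e0 ∧ ∃ N : ℝ, 0 < N ∧ ∃ κ : ℝ, 0 < κ ∧
      ∃ e1 : ℝ, 0 < e1 ∧ e1 ≤ N⁻¹ * Real.exp (-N) ∧
        ∀ ε : ℝ, 0 < ε → ε ≤ e1 →
          ∀ α ∈ ringA b, ∀ β ∈ ringA b, ∀ θ ∈ thetaSet e0, ∀ s : ℝ, 0 < s →
            ((¬ condAA a b N ε α β → solA a b α β θ (Real.exp s) ε = ∅) ∧
             (∀ n m : ℤ, ‖deltaAB a b α β n m‖ ≤ N * ε →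
                SetDomBySet κ (solA a b α β θ (Real.exp s) ε)
                  (diagOf (lineQ a b) ∪
                   diagOf (if 0 ≤ s + Real.log (‖deltaAB a b α β n m‖) + N then
                      lam1Line a b (s + Real.log (‖deltaAB a b α β n m‖) + N)
                    else ∅) ∪
                   diagOf (if 0 ≤ s + Real.log (‖deltaAB a b α β n m‖) + N then
                      lam2Line a b (s + Real.log (‖deltaAB a b α β n m‖) + N)
                    else ∅)))) := by
  obtain ⟨N, hN⟩ : ∃ N : ℝ,
      N = 4 + 2 * ‖etaC a b‖ + |Real.log ‖etaC a b‖| + |Real.log b| := ⟨_, rfl⟩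
  have hη := norm_nonneg (etaC a b)
  have hlogη := abs_nonneg (Real.log ‖etaC a b‖)
  have hlogb := abs_nonneg (Real.log b)
  have hlogb' := neg_abs_le (Real.log b)
  have hN0 : 0 < N := by linarith
  refine ⟨1 / 2, one_half_pos, N, hN0, 1 + 4 * Real.pi +
    (N + |Real.log ‖etaC a b‖| + 5 * Real.log 2) * (1 + ‖etaC a b‖) / b, by positivity,
    N⁻¹ * Real.exp (-N), by positivity, le_rfl, ?_⟩
  intro ε hε0 hε1 α hα β hβ θ hθ s _
  have hNε : N * ε ≤ Real.exp (-N) := by rwa [le_inv_mul_iff₀ hN0] at hε1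
  have hexpb : Real.exp (-N) < b := by
    rw [← Real.exp_log hb, Real.exp_lt_exp]
    linarith
  have hexp1 : Real.exp (-N) < 1 := Real.exp_lt_one_iff.2 (by linarith)
  have hε : ε ≤ 1 / 2 := by
    calc ε ≤ N⁻¹ * 1 := hε1.trans (by gcongr)
      _ ≤ 1 / 2 := by
        rw [mul_one, inv_le_comm₀ hN0 (by norm_num)]
        norm_num
        linarith
  have hlog2 : 5 * Real.log 2 ≤ 4 := by linarith [Real.log_two_lt_d9]
  refine ⟨fun hAA => eq_empty_of_forall_notMem fun p hp => hAA
    (condAA_of_mem_solA (ne_zero_of_mem_ringA hα) (ne_zero_of_mem_ringA hβ) (by linarith) hε hp),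
    fun n m hnm => setDomBySet_solA hb hα hβ hθ (by linarith) (by linarith) hε ?_ ?_ s hnm⟩
  · nlinarith [Real.pi_gt_three]
  · linarith [Real.pi_gt_three]
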